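/- Let 𝒳 = (Ω,S) be a thick coherent configuration and let d be the minimum of d(s) = n_s·n_{s*} over all irreflexive basis relations s. Then every basis relation s with d(s) ≤ d is irredundant, i.e., there are no irreflexive basis relations x, y with s = x·y and ⟨x⟩ ∧ ⟨y⟩ = 1_Ω. -/

import Mathlib

/-!
If `s = x·y` with `⟨x⟩ ∧ ⟨y⟩ = 1_Ω`, the midpoint `γ` of a pair `(α, β) ∈ s` is unique, so
`n_s = n_x n_y` and `n_{s*} = n_{y*} n_{x*}`, i.e. `d(s) = d(x) d(y)`. Thickness gives
`d(y) ≥ 2`, hence `d(s) ≥ 2 d(x) > d(x) ≥ d`.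
-/

open Set

def rcomp {Ω : Type*} (r s : Set (Ω × Ω)) : Set (Ω × Ω) :=
  {p | ∃ γ, (p.1, γ) ∈ r ∧ (γ, p.2) ∈ s}

def rconv {Ω : Type*} (r : Set (Ω × Ω)) : Set (Ω × Ω) := {p | (p.2, p.1) ∈ r}

def rdiag (Ω : Type*) : Set (Ω × Ω) := {p | p.1 = p.2}

def IsEquivRel {Ω : Type*} (e : Set (Ω × Ω)) : Prop :=
  Equivalence (fun a b => (a, b) ∈ e)

/-- The smallest equivalence relation containing `r`. -/
def eqvClosure {Ω : Type*} (r : Set (Ω × Ω)) : Set (Ω × Ω) :=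
  ⋂₀ {e | IsEquivRel e ∧ r ⊆ e}

/-- Join of two equivalence relations. -/
def rjoin {Ω : Type*} (e f : Set (Ω × Ω)) : Set (Ω × Ω) := eqvClosure (e ∪ f)

def IsClass {Ω : Type*} (e : Set (Ω × Ω)) (Δ : Set Ω) : Prop :=
  ∃ α, Δ = {β | (α, β) ∈ e}

def setoidRel {Ω : Type*} (e : Setoid Ω) : Set (Ω × Ω) := {p | e.r p.1 p.2}

/-- The relation induced on the quotient `Ω/e` by a relation `r` on `Ω`. -/
def qmap {Ω : Type*} (e : Setoid Ω) (r : Set (Ω × Ω)) :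
    Set (Quotient e × Quotient e) :=
  {p | ∃ a b : Ω, Quotient.mk e a = p.1 ∧ Quotient.mk e b = p.2 ∧ (a, b) ∈ r}

/-- Tensor product of relations. -/
def tensorRel {m : ℕ} {Ω : Fin m → Type*} (s : ∀ i, Set (Ω i × Ω i)) :
    Set ((∀ i, Ω i) × (∀ i, Ω i)) :=
  {p | ∀ i, (p.1 i, p.2 i) ∈ s i}

def tensor2 {Ω₁ Ω₂ : Type*} (s₁ : Set (Ω₁ × Ω₁)) (s₂ : Set (Ω₂ × Ω₂)) :
    Set ((Ω₁ × Ω₂) × (Ω₁ × Ω₂)) :=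
  {p | (p.1.1, p.2.1) ∈ s₁ ∧ (p.1.2, p.2.2) ∈ s₂}

/-- `PP e I` is the join of the equivalence relations `e i`, `i ∈ I`. -/
def PP {Ω : Type*} {m : ℕ} (e : Fin m → Set (Ω × Ω)) (I : Set (Fin m)) :
    Set (Ω × Ω) :=
  eqvClosure (⋃ i ∈ I, e i)

/-- An atomic Cartesian decomposition, given as a family of equivalence relations. -/
def IsACDfam {Ω : Type*} {m : ℕ} (e : Fin m → Set (Ω × Ω)) : Prop :=
  0 < m ∧ (∀ i, IsEquivRel (e i)) ∧ (∀ i, e i ≠ rdiag Ω) ∧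
  (∀ i j, rcomp (e i) (e j) = rcomp (e j) (e i)) ∧
  (∀ i, e i ∩ PP e ({i}ᶜ) = rdiag Ω) ∧
  (∀ i, rjoin (e i) (PP e ({i}ᶜ)) = Set.univ)

/-- Join of a set of relations. -/
def joinAll {Ω : Type*} (B : Set (Set (Ω × Ω))) : Set (Ω × Ω) := eqvClosure (⋃₀ B)

/-- The `P`-complement of `e`: the join of the members of `P` other than `e`. -/
def pcompl {Ω : Type*} (P : Set (Set (Ω × Ω))) (e : Set (Ω × Ω)) : Set (Ω × Ω) :=
  joinAll (P \ {e})

/-- An atomic Cartesian decomposition, given as a set of equivalence relations. -/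
def IsACD {Ω : Type*} (P : Set (Set (Ω × Ω))) : Prop :=
  P.Nonempty ∧ (∀ e ∈ P, IsEquivRel e ∧ e ≠ rdiag Ω) ∧
  (∀ e ∈ P, ∀ f ∈ P, rcomp e f = rcomp f e) ∧
  (∀ e ∈ P, e ∩ pcompl P e = rdiag Ω ∧ rjoin e (pcompl P e) = Set.univ)

def IsPartitionOf {α : Type*} (P : Set α) (C : Set (Set α)) : Prop :=
  (∀ B ∈ C, B.Nonempty) ∧ (∀ B ∈ C, ∀ B' ∈ C, B ≠ B' → Disjoint B B') ∧ ⋃₀ C = P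

/-- A coherent configuration on `Ω`. -/
structure CohCfg (Ω : Type*) where
  S : Set (Set (Ω × Ω))
  empty_not_mem : ∅ ∉ S
  cover : ∀ p : Ω × Ω, ∃ s ∈ S, p ∈ s
  pairwise_disjoint : ∀ s ∈ S, ∀ t ∈ S, s ≠ t → Disjoint s t
  diag_union : ∀ s ∈ S, (s ∩ rdiag Ω).Nonempty → s ⊆ rdiag Ω
  conv_mem : ∀ s ∈ S, rconv s ∈ S
  inter_const : ∀ r ∈ S, ∀ s ∈ S, ∀ t ∈ S, ∀ p ∈ t, ∀ q ∈ t,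
    ({γ : Ω | (p.1, γ) ∈ r ∧ (γ, p.2) ∈ s}).ncard
      = ({γ : Ω | (q.1, γ) ∈ r ∧ (γ, q.2) ∈ s}).ncard

/-- The valency of a basis relation (the common size of the rows over the left support). -/
noncomputable def valency {Ω : Type*} (s : Set (Ω × Ω)) : ℕ :=
  sSup ((fun α => ({β | (α, β) ∈ s} : Set Ω).ncard) '' {α | ∃ β, (α, β) ∈ s})

def IsThick {Ω : Type*} (X : CohCfg Ω) : Prop :=
  ∀ s ∈ X.S, Disjoint s (rdiag Ω) → ¬(valency s = 1 ∧ valency (rconv s) = 1)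

def IsParabolic {Ω : Type*} (X : CohCfg Ω) (e : Set (Ω × Ω)) : Prop :=
  IsEquivRel e ∧ ∀ s ∈ X.S, (s ∩ e).Nonempty → s ⊆ e

def Perp {Ω : Type*} (X : CohCfg Ω) (e f : Set (Ω × Ω)) : Prop :=
  ∀ x ∈ X.S, x ⊆ e → ∀ y ∈ X.S, y ⊆ f → (rcomp x y).Nonempty → rcomp x y ∈ X.S

def Redundant {Ω : Type*} (X : CohCfg Ω) (s : Set (Ω × Ω)) : Prop :=
  ∃ x ∈ X.S, ∃ y ∈ X.S, Disjoint x (rdiag Ω) ∧ Disjoint y (rdiag Ω) ∧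
    s = rcomp x y ∧ eqvClosure x ∩ eqvClosure y = rdiag Ω

section Relations

variable {Ω : Type*} {x y : Set (Ω × Ω)}

lemma eqvClosure_isEquivRel (r : Set (Ω × Ω)) : IsEquivRel (eqvClosure r) where
  refl a := mem_sInter.2 fun _ he => he.1.refl a
  symm h := mem_sInter.2 fun e he => he.1.symm (mem_sInter.1 h e he)
  trans h₁ h₂ := mem_sInter.2 fun e he => he.1.trans (mem_sInter.1 h₁ e he) (mem_sInter.1 h₂ e he)

lemma subset_eqvClosure (r : Set (Ω × Ω)) : r ⊆ eqvClosure r :=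
  fun _ hp => mem_sInter.2 fun _ he => he.2 hp

lemma rconv_rcomp (x y : Set (Ω × Ω)) : rconv (rcomp x y) = rcomp (rconv y) (rconv x) := by
  ext ⟨α, β⟩
  exact ⟨fun ⟨γ, h₁, h₂⟩ => ⟨γ, h₂, h₁⟩, fun ⟨γ, h₁, h₂⟩ => ⟨γ, h₂, h₁⟩⟩

def HasUniqueMidpoints (x y : Set (Ω × Ω)) : Prop :=
  ∀ ⦃α β γ γ' : Ω⦄, (α, γ) ∈ x → (γ, β) ∈ y → (α, γ') ∈ x → (γ', β) ∈ y → γ = γ'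

lemma hasUniqueMidpoints_of_eqvClosure_inter_eq_rdiag
    (h : eqvClosure x ∩ eqvClosure y = rdiag Ω) : HasUniqueMidpoints x y := by
  intro α β γ γ' hαγ hγβ hαγ' hγ'β
  have hx := eqvClosure_isEquivRel x
  have hy := eqvClosure_isEquivRel y
  have hmem : (γ, γ') ∈ eqvClosure x ∩ eqvClosure y :=
    ⟨hx.trans (hx.symm (subset_eqvClosure x hαγ)) (subset_eqvClosure x hαγ'),
      hy.trans (subset_eqvClosure y hγβ) (hy.symm (subset_eqvClosure y hγ'β))⟩
  rw [h] at hmem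
  exact hmem

lemma HasUniqueMidpoints.rconv (h : HasUniqueMidpoints x y) :
    HasUniqueMidpoints (rconv y) (rconv x) :=
  fun _ _ _ _ hβγ hγα hβγ' hγ'α => h hγα hβγ hγ'α hβγ'

end Relations

namespace CohCfg

variable {Ω : Type*} (X : CohCfg Ω) {r s x y : Set (Ω × Ω)}

lemma nonempty_of_mem (hs : s ∈ X.S) : s.Nonempty :=
  nonempty_iff_ne_empty.2 fun h => X.empty_not_mem (h ▸ hs)

lemma ncard_row_eq_of_mem_diag {t : Set (Ω × Ω)} (hr : r ∈ X.S) (ht : t ∈ X.S) {α α' : Ω}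
    (hα : (α, α) ∈ t) (hα' : (α', α') ∈ t) :
    {β | (α, β) ∈ r}.ncard = {β | (α', β) ∈ r}.ncard := by
  simpa only [rconv, mem_ofPred_eq, and_self] using
    X.inter_const r hr (_root_.rconv r) (X.conv_mem r hr) t ht _ hα _ hα'

variable [Finite Ω]

lemma diag_mem_of_mem {t : Set (Ω × Ω)} (hs : s ∈ X.S) (ht : t ∈ X.S) {α β α' β' : Ω}
    (h : (α, β) ∈ s) (h' : (α', β') ∈ s) (hα : (α, α) ∈ t) : (α', α') ∈ t := by
  have hpos : 0 < {γ | (α, γ) ∈ t ∧ (γ, β) ∈ s}.ncard :=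
    (ncard_pos (toFinite _)).2 ⟨α, hα, h⟩
  rw [X.inter_const t ht s hs s hs _ h _ h'] at hpos
  obtain ⟨γ, hγ, -⟩ := (ncard_pos (toFinite _)).1 hpos
  obtain rfl : α' = γ := X.diag_union t ht ⟨_, hα, rfl⟩ hγ
  exact hγ

lemma ncard_row_eq_of_mem (hr : r ∈ X.S) (hs : s ∈ X.S) {α β α' β' : Ω}
    (h : (α, β) ∈ s) (h' : (α', β') ∈ s) :
    {γ | (α, γ) ∈ r}.ncard = {γ | (α', γ) ∈ r}.ncard := by
  obtain ⟨t, ht, hα⟩ := X.cover (α, α)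
  exact X.ncard_row_eq_of_mem_diag hr ht hα (X.diag_mem_of_mem hs ht h h' hα)

lemma valency_eq_ncard_row (hs : s ∈ X.S) {α β : Ω} (h : (α, β) ∈ s) :
    valency s = {γ | (α, γ) ∈ s}.ncard := by
  have himage : (fun a => {b | (a, b) ∈ s}.ncard) '' {a | ∃ b, (a, b) ∈ s}
      = {{γ | (α, γ) ∈ s}.ncard} :=
    eq_singleton_iff_unique_mem.2 ⟨⟨α, ⟨β, h⟩, rfl⟩,
      by rintro _ ⟨a, ⟨b, hab⟩, rfl⟩; exact X.ncard_row_eq_of_mem hs hs hab h⟩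
  rw [valency, himage, csSup_singleton]

lemma one_le_valency (hs : s ∈ X.S) : 1 ≤ valency s := by
  obtain ⟨⟨α, β⟩, h⟩ := X.nonempty_of_mem hs
  rw [X.valency_eq_ncard_row hs h]
  exact (ncard_pos (toFinite _)).2 ⟨β, h⟩

lemma valency_rcomp (hx : x ∈ X.S) (hy : y ∈ X.S) (hxy : rcomp x y ∈ X.S)
    (hU : HasUniqueMidpoints x y) : valency (rcomp x y) = valency x * valency y := by
  obtain ⟨⟨α, β⟩, γ₀, hαγ₀, hγ₀β⟩ := X.nonempty_of_mem hxy
  have hrow : {β | (α, β) ∈ rcomp x y} = ⋃ γ ∈ {γ | (α, γ) ∈ x}, {β | (γ, β) ∈ y} := by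
    ext β
    simp only [rcomp, mem_ofPred_eq, mem_iUnion, exists_prop]
  have hdisj : PairwiseDisjoint {γ | (α, γ) ∈ x} fun γ => {β | (γ, β) ∈ y} :=
    fun γ hγ γ' hγ' hne => disjoint_left.2 fun _ hβ hβ' => hne (hU hγ hβ hγ' hβ')
  have hfibre : ∀ γ ∈ {γ | (α, γ) ∈ x}, {β | (γ, β) ∈ y}.ncard = valency y := fun γ hγ => by
    rw [X.valency_eq_ncard_row hy hγ₀β,
      X.ncard_row_eq_of_mem hy (X.conv_mem x hx) (show (γ, α) ∈ rconv x from hγ)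
        (show (γ₀, α) ∈ rconv x from hαγ₀)]
  rw [X.valency_eq_ncard_row hxy ⟨γ₀, hαγ₀, hγ₀β⟩, hrow,
    (toFinite _).ncard_biUnion (fun _ _ => toFinite _) hdisj, finsum_mem_congr rfl hfibre,
    finsum_mem_eq_finite_toFinset_sum _ (toFinite _), Finset.sum_const, smul_eq_mul,
    ← ncard_eq_toFinset_card _ (toFinite _), X.valency_eq_ncard_row hx hαγ₀]

lemma valency_mul_valency_rconv_rcomp (hx : x ∈ X.S) (hy : y ∈ X.S) (hxy : rcomp x y ∈ X.S)
    (hU : HasUniqueMidpoints x y) :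
    valency (rcomp x y) * valency (rconv (rcomp x y))
      = valency x * valency (rconv x) * (valency y * valency (rconv y)) := by
  have hyx := rconv_rcomp x y ▸ X.conv_mem _ hxy
  rw [X.valency_rcomp hx hy hxy hU, rconv_rcomp,
    X.valency_rcomp (X.conv_mem y hy) (X.conv_mem x hx) hyx hU.rconv]
  ring

lemma two_le_valency_mul_valency_rconv (hX : IsThick X) (hs : s ∈ X.S)
    (hirr : Disjoint s (rdiag Ω)) : 2 ≤ valency s * valency (rconv s) := by
  have h₁ := X.one_le_valency hs
  have h₂ := X.one_le_valency (X.conv_mem s hs)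
  by_contra! hlt
  exact hX s hs hirr ⟨by nlinarith, by nlinarith⟩

end CohCfg

/-- in a thick coherent configuration, every basis relation `s` with
`d(s) ≤ d := min { d(t) : t irreflexive basis relation }` is irredundant. -/
theorem stmt15 {Ω : Type*} [Fintype Ω] (X : CohCfg Ω) (hX : IsThick X)
    (d : ℕ)
    (hd : d = sInf {n | ∃ t ∈ X.S, Disjoint t (rdiag Ω) ∧
      n = valency t * valency (rconv t)}) :
    ∀ s ∈ X.S, valency s * valency (rconv s) ≤ d → ¬ Redundant X s := by
  rintro s hs hle ⟨x, hx, y, hy, hxirr, hyirr, rfl, hxy⟩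
  have hd_le : d ≤ valency x * valency (rconv x) := hd ▸ Nat.sInf_le ⟨x, hx, hxirr, rfl⟩
  have hx₂ := X.two_le_valency_mul_valency_rconv hX hx hxirr
  have hy₂ := X.two_le_valency_mul_valency_rconv hX hy hyirr
  rw [X.valency_mul_valency_rconv_rcomp hx hy hs
    (hasUniqueMidpoints_of_eqvClosure_inter_eq_rdiag hxy)] at hle
  nlinarith
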